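/- arXiv:2307.09428 — 3 statements merged into one kernel-verified Lean document; each statement's English description precedes it below -/
import Mathlib

section
/- Let A ∈ ℝ^{n×n}, B ∈ ℝ^{n×m}, let Q ∈ ℝ^{n×n} be symmetric positive semidefinite with (A, Q) Hautus-observable, and let R ∈ ℝ^{m×m} be symmetric positive definite. Let K₀ ∈ ℝ^{m×n} be such that A − BK₀ is Hurwitz, and suppose the sequences (P_k)_{k≥1} and (K_k)_{k≥1} satisfy, for every k ≥ 1: P_k is symmetric and solves (A − BK_{k−1})ᵀP_k + P_k(A − BK_{k−1}) + Q + K_{k−1}ᵀ R K_{k−1} = 0, and K_k = R⁻¹BᵀP_k. Then for every k ≥ 0 the matrix A − BK_k is Hurwitz. -/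
open Matrix

/-- A real square matrix is Hurwitz if every eigenvalue of it, viewed as a complex
matrix, has strictly negative real part. -/
def Hurwitz {n : ℕ} (M : Matrix (Fin n) (Fin n) ℝ) : Prop :=
  ∀ μ ∈ spectrum ℂ (M.map Complex.ofReal), μ.re < 0

/-- The pair `(A, Q)` is Hautus-observable if every (complex) eigenvector of `A`
is not in the kernel of `Q`. -/
def HautusObservable {n : ℕ} (A Q : Matrix (Fin n) (Fin n) ℝ) : Prop :=
  ∀ (μ : ℂ) (v : Fin n → ℂ), v ≠ 0 →
    (A.map Complex.ofReal).mulVec v = μ • v → (Q.map Complex.ofReal).mulVec v ≠ 0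

/-!
Induction on `k`. Write `F = A - B K_k` and `P = P_{k+1}`.

If `F` is Hurwitz, its Cayley transform `T = (F + 1)(F - 1)⁻¹` has spectral radius `< 1`, and it
turns `Fᴴ P + P F = -C` into the Stein equation `P = Tᴴ P T + 2 Uᴴ C U` with `U = (F - 1)⁻¹`.
Iterating, `P - (Tᴺ)ᴴ P Tᴺ ≥ 0` for all `N`, and letting `N → ∞` gives `P ≥ 0`.

With `K_{k+1} = R⁻¹ Bᵀ P`, the same `P` solves the Lyapunov equation of `A - B K_{k+1}` with cost
`Q + K_{k+1}ᵀ R K_{k+1} + (K_{k+1} - K_k)ᵀ R (K_{k+1} - K_k)`. For an eigenvector `v` of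
`A - B K_{k+1}` with eigenvalue `μ`, this reads `2 Re μ · v* P v = -v* (cost) v`, so `Re μ ≥ 0`
forces `Q v = 0` and `K_{k+1} v = 0`; then `A v = μ v`, contradicting observability.
-/

open Filter Topology
open scoped ComplexOrder

theorem Complex.norm_one_add_two_mul_lt_one {z : ℂ} (hz : (z⁻¹ + 1).re < 0) :
    ‖1 + 2 * z‖ < 1 := by
  have hz0 : z ≠ 0 := by rintro rfl; norm_num at hz
  have hn : 0 < normSq z := normSq_pos.mpr hz0
  rw [add_re, inv_re, one_re] at hz
  have hre : z.re < -normSq z := by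
    have := (div_lt_iff₀ hn).mp (show z.re / normSq z < -1 by linarith)
    linarith
  rw [← sq_lt_one_iff₀ (norm_nonneg _), Complex.sq_norm]
  simp only [normSq_apply, add_re, one_re, mul_re, add_im, one_im, mul_im, re_ofNat,
    im_ofNat] at hre ⊢
  nlinarith

theorem tendsto_pow_atTop_nhds_zero_of_spectralRadius_lt_one {A : Type*} [NormedRing A]
    [NormedAlgebra ℂ A] [CompleteSpace A] {a : A} (ha : spectralRadius ℂ a < 1) :
    Tendsto (a ^ ·) atTop (𝓝 0) := by
  obtain ⟨r, hρr, hr1⟩ := ENNReal.lt_iff_exists_nnreal_btwn.mp ha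
  have hbound : ∀ᶠ N : ℕ in atTop, ‖a ^ N‖ ≤ (r : ℝ) ^ N := by
    filter_upwards [
      (spectrum.pow_nnnorm_pow_one_div_tendsto_nhds_spectralRadius a).eventually_lt_const hρr,
      eventually_gt_atTop 0] with N hN hN0
    rw [one_div, ENNReal.rpow_inv_lt_iff (Nat.cast_pos.mpr hN0), ENNReal.rpow_natCast] at hN
    exact_mod_cast hN.le
  exact squeeze_zero_norm' hbound
    (tendsto_pow_atTop_nhds_zero_of_lt_one r.coe_nonneg (by exact_mod_cast hr1))

section Cayley

variable {A : Type*} [Ring A]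

-- `Ring.inverse` is `0` on non-units; `cayley a` is only used when `a - 1` is a unit.
noncomputable def cayley (a : A) : A := (a + 1) * Ring.inverse (a - 1)

theorem cayley_eq_one_add {a : A} (h : IsUnit (a - 1)) :
    cayley a = 1 + 2 * Ring.inverse (a - 1) := by
  rw [cayley, show a + 1 = a - 1 + 2 by rw [← one_add_one_eq_two]; abel, add_mul,
    Ring.mul_inverse_cancel _ h]

theorem star_cayley_mul_mul_cayley [StarRing A] {a p c : A} (hu : IsUnit (a - 1))
    (h : star a * p + p * a = -c) :
    star (cayley a) * p * cayley a =
      p - (star (Ring.inverse (a - 1)) * c * Ring.inverse (a - 1) +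
        star (Ring.inverse (a - 1)) * c * Ring.inverse (a - 1)) := by
  have hw := Ring.mul_inverse_cancel _ hu
  rw [cayley]
  generalize Ring.inverse (a - 1) = w at hw ⊢
  have hw' : star w * star (a - 1) = 1 := by rw [← star_mul, hw, star_one]
  have hc : c = -(star a * p + p * a) := by rw [h, neg_neg]
  have hplus : star (a + 1) * p * (a + 1) = star (a - 1) * p * (a - 1) - (c + c) := by
    rw [hc, star_add, star_sub, star_one]
    noncomm_ring
  calc star ((a + 1) * w) * p * ((a + 1) * w) = star w * (star (a + 1) * p * (a + 1)) * w := by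
        rw [star_mul]; noncomm_ring
    _ = (star w * star (a - 1)) * p * ((a - 1) * w) - (star w * c * w + star w * c * w) := by
        rw [hplus]; noncomm_ring
    _ = _ := by rw [hw, hw', one_mul, mul_one]

variable [Algebra ℂ A]

theorem isUnit_sub_one_of_forall_re_neg {a : A} (ha : ∀ μ ∈ spectrum ℂ a, μ.re < 0) :
    IsUnit (a - 1) := by
  have h : IsUnit (algebraMap ℂ A 1 - a) :=
    spectrum.notMem_iff.mp fun h1 => (ha 1 h1).not_ge zero_le_one
  simpa using h.neg

theorem norm_lt_one_of_mem_spectrum_cayley {a : A} (ha : ∀ μ ∈ spectrum ℂ a, μ.re < 0) {z : ℂ}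
    (hz : z ∈ spectrum ℂ (cayley a)) : ‖z‖ < 1 := by
  obtain ⟨u, hu⟩ := isUnit_sub_one_of_forall_re_neg ha
  rw [cayley_eq_one_add ⟨u, hu⟩, ← hu, Ring.inverse_unit] at hz
  have hmem_two_mul : z - 1 ∈ spectrum ℂ (2 * (↑u⁻¹ : A)) := by
    rw [← spectrum.add_mem_add_iff (s := 1)]
    simpa using hz
  have hmem_inv : (z - 1) / 2 ∈ spectrum ℂ (↑u⁻¹ : A) := by
    rw [← spectrum.smul_mem_smul_iff (r := Units.mk0 (2 : ℂ) two_ne_zero)]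
    simpa [Units.smul_def, mul_div_cancel₀, ofNat_smul_eq_nsmul, two_nsmul, two_mul] using hmem_two_mul
  have hmem : ((z - 1) / 2)⁻¹ + 1 ∈ spectrum ℂ a := by
    rw [spectrum.add_mem_iff, map_one, neg_add_eq_sub, ← hu]
    exact spectrum.inv₀_mem hmem_inv
  simpa [mul_div_cancel₀] using Complex.norm_one_add_two_mul_lt_one (ha _ hmem)

end Cayley

section CStarAlgebra

variable {A : Type*} [CStarAlgebra A] [PartialOrder A] [StarOrderedRing A]

theorem nonneg_of_eq_star_mul_mul_add {p t d : A} (hd : 0 ≤ d) (h : p = star t * p * t + d)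
    (ht : Tendsto (t ^ ·) atTop (𝓝 0)) : 0 ≤ p := by
  have hstep : star t * p * t = p - d := eq_sub_of_add_eq h.symm
  have hsub : ∀ N : ℕ, 0 ≤ p - star (t ^ N) * p * t ^ N := by
    intro N
    induction N with
    | zero => simp
    | succ N ih =>
      have : p - star (t ^ (N + 1)) * p * t ^ (N + 1) =
          (p - star (t ^ N) * p * t ^ N) + star (t ^ N) * d * t ^ N := by
        rw [pow_succ', star_mul, show star (t ^ N) * star t * p * (t * t ^ N) =
          star (t ^ N) * (star t * p * t) * t ^ N by noncomm_ring, hstep]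
        noncomm_ring
      exact this ▸ add_nonneg ih (star_left_conjugate_nonneg hd _)
  have hlim : Tendsto (fun N : ℕ => p - star (t ^ N) * p * t ^ N) atTop (𝓝 p) := by
    simpa using tendsto_const_nhds.sub ((ht.star.mul_const p).mul ht)
  exact ge_of_tendsto' hlim hsub

theorem nonneg_of_star_mul_add_mul_eq_neg {a p c : A} (ha : ∀ μ ∈ spectrum ℂ a, μ.re < 0)
    (hc : 0 ≤ c) (h : star a * p + p * a = -c) : 0 ≤ p := by
  nontriviality A
  have hw := star_left_conjugate_nonneg hc (Ring.inverse (a - 1))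
  refine nonneg_of_eq_star_mul_mul_add (t := cayley a) (add_nonneg hw hw) ?_ ?_
  · rw [star_cayley_mul_mul_cayley (isUnit_sub_one_of_forall_re_neg ha) h, sub_add_cancel]
  · refine tendsto_pow_atTop_nhds_zero_of_spectralRadius_lt_one ?_
    simpa using spectrum.spectralRadius_lt_of_forall_lt (cayley a) (r := 1) fun z hz =>
      (by exact_mod_cast norm_lt_one_of_mem_spectrum_cayley ha hz)

end CStarAlgebra

section Complexification

variable {ι l m n : Type*} [Fintype ι]

theorem Matrix.exists_mulVec_eq_smul_of_mem_spectrum [DecidableEq ι] {K : Type*} [Field K]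
    {M : Matrix ι ι K} {μ : K} (h : μ ∈ spectrum K M) : ∃ v ≠ 0, M *ᵥ v = μ • v := by
  rw [← Matrix.spectrum_toLin', ← Module.End.hasEigenvalue_iff_mem_spectrum] at h
  obtain ⟨v, hv⟩ := h.exists_hasEigenvector
  exact ⟨v, hv.2, by simpa using hv.apply_eq_smul⟩

theorem Matrix.map_ofReal_add (M N : Matrix m n ℝ) :
    (M + N).map Complex.ofReal = M.map Complex.ofReal + N.map Complex.ofReal :=
  Matrix.map_add _ Complex.ofReal_add M N

theorem Matrix.map_ofReal_mul [Fintype m] (M : Matrix l m ℝ) (N : Matrix m n ℝ) :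
    (M * N).map Complex.ofReal = M.map Complex.ofReal * N.map Complex.ofReal :=
  Matrix.map_mul (f := Complex.ofRealHom)

theorem Matrix.conjTranspose_map_ofReal (M : Matrix m n ℝ) :
    (M.map Complex.ofReal)ᴴ = Mᵀ.map Complex.ofReal := by
  rw [← conjTranspose_map _ fun x => by simp, conjTranspose_eq_transpose_of_trivial]

theorem Matrix.IsSymm.of_isHermitian_map_ofReal {M : Matrix n n ℝ}
    (h : (M.map Complex.ofReal).IsHermitian) : M.IsSymm :=
  Matrix.map_injective Complex.ofReal_injective ((conjTranspose_map_ofReal M).symm.trans h)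

theorem Matrix.PosSemidef.map_ofReal {M : Matrix ι ι ℝ} (hM : M.PosSemidef) :
    (M.map Complex.ofReal).PosSemidef := by
  classical
  obtain ⟨L, rfl⟩ : ∃ L : Matrix ι ι ℝ, M = star L * L := by
    open scoped MatrixOrder Matrix.Norms.L2Operator in
    exact CStarAlgebra.nonneg_iff_eq_star_mul_self.mp hM.nonneg
  rw [map_ofReal_mul, star_eq_conjTranspose, conjTranspose_eq_transpose_of_trivial,
    ← conjTranspose_map_ofReal]
  exact posSemidef_conjTranspose_mul_self _

theorem Matrix.PosDef.map_ofReal [DecidableEq ι] {M : Matrix ι ι ℝ} (hM : M.PosDef) :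
    (M.map Complex.ofReal).PosDef :=
  hM.posSemidef.map_ofReal.posDef_iff_isUnit.mpr (hM.isUnit.map Complex.ofRealHom.mapMatrix)

theorem Matrix.lyapunov_map_ofReal {F P C : Matrix ι ι ℝ} (h : Fᵀ * P + P * F + C = 0) :
    (F.map Complex.ofReal)ᴴ * P.map Complex.ofReal + P.map Complex.ofReal * F.map Complex.ofReal
      + C.map Complex.ofReal = 0 := by
  rw [conjTranspose_map_ofReal, ← map_ofReal_mul, ← map_ofReal_mul, ← map_ofReal_add,
    ← map_ofReal_add, h, Matrix.map_zero _ Complex.ofReal_zero]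

end Complexification

section Kernels

variable {ι m : Type*} [Fintype ι] {𝕜 : Type*} [RCLike 𝕜]

theorem Matrix.PosSemidef.mulVec_eq_zero_of_add {M N : Matrix ι ι 𝕜} (hM : M.PosSemidef)
    (hN : N.PosSemidef) {v : ι → 𝕜} (h : (M + N) *ᵥ v = 0) : M *ᵥ v = 0 ∧ N *ᵥ v = 0 := by
  rw [← hM.dotProduct_mulVec_zero_iff, ← hN.dotProduct_mulVec_zero_iff]
  rw [← (hM.add hN).dotProduct_mulVec_zero_iff, add_mulVec, dotProduct_add] at h
  exact (add_eq_zero_iff_of_nonneg (hM.dotProduct_mulVec_nonneg v)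
    (hN.dotProduct_mulVec_nonneg v)).mp h

theorem Matrix.PosDef.mulVec_eq_zero_of_conjTranspose_mul_mul [Fintype m] {R : Matrix m m 𝕜}
    (hR : R.PosDef) {K : Matrix m ι 𝕜} {v : ι → 𝕜} (h : (Kᴴ * R * K) *ᵥ v = 0) :
    K *ᵥ v = 0 := by
  rw [← (hR.posSemidef.conjTranspose_mul_mul_same K).dotProduct_mulVec_zero_iff,
    Matrix.mul_assoc, ← mulVec_mulVec, dotProduct_mulVec, ← star_mulVec, ← mulVec_mulVec] at h
  by_contra hne
  exact (hR.dotProduct_mulVec_pos hne).ne' h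

end Kernels

theorem Matrix.PosSemidef.mulVec_eq_zero_of_lyapunov {ι : Type*} [Fintype ι]
    {F P C : Matrix ι ι ℂ} (hC : C.PosSemidef) (hP : P.PosSemidef) (h : Fᴴ * P + P * F + C = 0)
    {μ : ℂ} (hμ : 0 ≤ μ.re) {v : ι → ℂ} (hv : F *ᵥ v = μ • v) : C *ᵥ v = 0 := by
  have hquad : star v ⬝ᵥ C *ᵥ v = -(((2 * μ.re : ℝ) : ℂ) * (star v ⬝ᵥ P *ᵥ v)) := by
    rw [eq_neg_of_add_eq_zero_right h, neg_mulVec, dotProduct_neg, add_mulVec, dotProduct_add,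
      ← mulVec_mulVec, ← mulVec_mulVec, dotProduct_mulVec, ← star_mulVec, hv, mulVec_smul,
      star_smul, smul_dotProduct, dotProduct_smul, smul_eq_mul, smul_eq_mul, ← add_mul,
      Complex.star_def, add_comm, Complex.add_conj]
  rw [← hC.dotProduct_mulVec_zero_iff]
  refine le_antisymm ?_ (hC.dotProduct_mulVec_nonneg v)
  rw [hquad, neg_nonpos]
  exact mul_nonneg (by exact_mod_cast (by positivity : (0 : ℝ) ≤ 2 * μ.re))
    (hP.dotProduct_mulVec_nonneg v)

theorem Hurwitz.posSemidef_map_ofReal_of_lyapunov {n : ℕ} {F P C : Matrix (Fin n) (Fin n) ℝ}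
    (hF : Hurwitz F) (hC : C.PosSemidef) (h : Fᵀ * P + P * F + C = 0) :
    (P.map Complex.ofReal).PosSemidef := by
  open scoped MatrixOrder Matrix.Norms.L2Operator in
  exact nonneg_iff_posSemidef.mp <| nonneg_of_star_mul_add_mul_eq_neg hF hC.map_ofReal.nonneg
    (eq_neg_of_add_eq_zero_left (lyapunov_map_ofReal h))

theorem Matrix.lyapunov_of_policy_improvement {α : Type*} [CommRing α] {n m : Type*} [Fintype n]
    [Fintype m] {A P Q : Matrix n n α} {B : Matrix n m α} {R : Matrix m m α} {K K' : Matrix m n α}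
    (hP : P.IsSymm) (hR : R.IsSymm) (hBP : Bᵀ * P = R * K')
    (h : (A - B * K)ᵀ * P + P * (A - B * K) + Q + Kᵀ * R * K = 0) :
    (A - B * K')ᵀ * P + P * (A - B * K') + (Q + K'ᵀ * R * K' + (K' - K)ᵀ * R * (K' - K)) = 0 := by
  have hPB : P * B = K'ᵀ * R := by
    rw [← hP.eq, ← hR.eq, ← transpose_mul, ← hBP, transpose_mul, transpose_transpose]
  have hsplit : (A - B * K')ᵀ * P + P * (A - B * K') + (Q + K'ᵀ * R * K' + (K' - K)ᵀ * R * (K' - K))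
      = ((A - B * K)ᵀ * P + P * (A - B * K) + Q + Kᵀ * R * K)
        + (K' - K)ᵀ * (R * K' - Bᵀ * P) + (K'ᵀ * R - P * B) * (K' - K) := by
    simp only [transpose_sub, transpose_mul, Matrix.mul_sub, Matrix.sub_mul, Matrix.mul_assoc]
    abel
  rw [hsplit, h, hBP, hPB, sub_self, sub_self, Matrix.mul_zero, Matrix.zero_mul, add_zero, add_zero]

theorem hurwitz_sub_mul_of_lyapunov {n m : ℕ} {A Q P D : Matrix (Fin n) (Fin n) ℝ}
    {B : Matrix (Fin n) (Fin m) ℝ} {R : Matrix (Fin m) (Fin m) ℝ} {K : Matrix (Fin m) (Fin n) ℝ}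
    (hQ : Q.PosSemidef) (hobs : HautusObservable A Q) (hR : R.PosDef) (hD : D.PosSemidef)
    (hP : (P.map Complex.ofReal).PosSemidef)
    (h : (A - B * K)ᵀ * P + P * (A - B * K) + (Q + Kᵀ * R * K + D) = 0) :
    Hurwitz (A - B * K) := by
  intro μ hμ
  by_contra! hμre
  obtain ⟨v, hv, hFv⟩ := exists_mulVec_eq_smul_of_mem_spectrum hμ
  have hQ' := hQ.map_ofReal
  have hKRK := hR.map_ofReal.posSemidef.conjTranspose_mul_mul_same (K.map Complex.ofReal)
  have hC := lyapunov_map_ofReal h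
  rw [map_ofReal_add, map_ofReal_add, map_ofReal_mul, map_ofReal_mul,
    ← conjTranspose_map_ofReal] at hC
  have hCv := ((hQ'.add hKRK).add hD.map_ofReal).mulVec_eq_zero_of_lyapunov hP hC hμre hFv
  obtain ⟨hQKv, -⟩ := (hQ'.add hKRK).mulVec_eq_zero_of_add hD.map_ofReal hCv
  obtain ⟨hQv, hKRKv⟩ := hQ'.mulVec_eq_zero_of_add hKRK hQKv
  have hKv := hR.map_ofReal.mulVec_eq_zero_of_conjTranspose_mul_mul hKRKv
  refine hobs μ v hv ?_ hQv
  rw [← sub_add_cancel A (B * K), map_ofReal_add, add_mulVec, hFv, map_ofReal_mul,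
    ← mulVec_mulVec, hKv, mulVec_zero, add_zero]

theorem policy_iteration_hurwitz_general {n m : ℕ}
    (A : Matrix (Fin n) (Fin n) ℝ) (B : Matrix (Fin n) (Fin m) ℝ)
    (Q : Matrix (Fin n) (Fin n) ℝ) (R : Matrix (Fin m) (Fin m) ℝ)
    (hQ : Q.PosSemidef) (hobs : HautusObservable A Q) (hR : R.PosDef)
    (P : ℕ → Matrix (Fin n) (Fin n) ℝ) (K : ℕ → Matrix (Fin m) (Fin n) ℝ)
    (hK0 : Hurwitz (A - B * K 0))
    (hLyap : ∀ k : ℕ,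
      (A - B * K k)ᵀ * P (k + 1) + P (k + 1) * (A - B * K k) + Q + (K k)ᵀ * R * K k = 0)
    (hKiter : ∀ k : ℕ, K (k + 1) = R⁻¹ * Bᵀ * P (k + 1)) :
    ∀ k : ℕ, Hurwitz (A - B * K k) := by
  have hRK : ∀ L : Matrix (Fin m) (Fin n) ℝ, (Lᵀ * R * L).PosSemidef := fun L => by
    simpa only [conjTranspose_eq_transpose_of_trivial] using
      hR.posSemidef.conjTranspose_mul_mul_same L
  intro k
  induction k with
  | zero => exact hK0
  | succ k ih =>
    have hP := ih.posSemidef_map_ofReal_of_lyapunov (hQ.add (hRK (K k)))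
      (by rw [← add_assoc]; exact hLyap k)
    have hBP : Bᵀ * P (k + 1) = R * K (k + 1) := by
      rw [hKiter k, Matrix.mul_assoc, mul_nonsing_inv_cancel_left _ _ hR.det_pos.ne'.isUnit]
    exact hurwitz_sub_mul_of_lyapunov hQ hobs hR (hRK _) hP
      (lyapunov_of_policy_improvement (.of_isHermitian_map_ofReal hP.isHermitian)
        (isHermitian_iff_isSymm.mp hR.isHermitian) hBP (hLyap k))

/-- Kleinman policy iteration, property 1: every iterate `K_k` is stabilizing. -/
theorem policy_iteration_hurwitz {n m : ℕ}
    (A : Matrix (Fin n) (Fin n) ℝ) (B : Matrix (Fin n) (Fin m) ℝ)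
    (Q : Matrix (Fin n) (Fin n) ℝ) (R : Matrix (Fin m) (Fin m) ℝ)
    (hQ : Q.PosSemidef) (hobs : HautusObservable A Q) (hR : R.PosDef)
    (P : ℕ → Matrix (Fin n) (Fin n) ℝ) (K : ℕ → Matrix (Fin m) (Fin n) ℝ)
    (hK0 : Hurwitz (A - B * K 0))
    (hPsymm : ∀ k : ℕ, (P (k + 1)).IsSymm)
    (hLyap : ∀ k : ℕ,
      (A - B * K k)ᵀ * P (k + 1) + P (k + 1) * (A - B * K k) + Q + (K k)ᵀ * R * K k = 0)
    (hKiter : ∀ k : ℕ, K (k + 1) = R⁻¹ * Bᵀ * P (k + 1)) :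
    ∀ k : ℕ, Hurwitz (A - B * K k) :=
  policy_iteration_hurwitz_general A B Q R hQ hobs hR P K hK0 hLyap hKiter
end

section
/- Let A ∈ ℝ^{n×n}, B ∈ ℝ^{n×m}, C ∈ ℝ^{p×n}, and E ∈ ℝ^{q×q}. Suppose that for every eigenvalue λ ∈ ℂ of E, the complex (n+p)×(n+m) block matrix [[A − λIₙ, B],[C, 0]] has rank n + p. Then for every D ∈ ℝ^{n×q} and every F ∈ ℝ^{p×q} there exist X ∈ ℝ^{n×q} and U ∈ ℝ^{m×q} solving the regulator equations XE = AX + BU + D and CX + F = 0. -/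
/-!
Writing `W = [X; U]`, the regulator equations say that `Q W E - P W = [D; F]` with
`P = [[A, B], [C, 0]]` and `Q = [[1, 0], [0, 0]]`. For the trace pairing, the adjoint of
`W ↦ Q W E - P W` is `V ↦ Qᴴ V Eᴴ - Pᴴ V`, and over `ℝ` a linear map is onto as soon as its
adjoint is injective. A vector `V` in the kernel of the adjoint gives `S = Vᴴ` with
`E S Q = S P`, hence `(x S) (P - μ Q) = (x (E - μ)) S Q` for every row vector `x`. By the rank
condition at an eigenvalue `μ`, if `S` kills `x (E - μ)` then it kills `x`; inductively `S`
kills every generalized left eigenvector of `E` over `ℂ`, and these span, so `S = 0`.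
-/

open Matrix

namespace Module.End

variable {K V W : Type*} [Field K] [AddCommGroup V] [Module K V] [AddCommGroup W]
  [Module K W]

theorem genEigenspace_le_ker {f : End K V} {Φ : V →ₗ[K] W} {μ : K}
    (h : f.HasEigenvalue μ → LinearMap.ker (Φ ∘ₗ (f - μ • 1)) ≤ LinearMap.ker Φ) (k : ℕ) :
    f.genEigenspace μ k ≤ LinearMap.ker Φ := by
  induction k with
  | zero => simp
  | succ k ih =>
    intro v hv
    by_cases hμ : f.HasEigenvalue μ
    · apply h hμ
      rw [LinearMap.mem_ker, LinearMap.comp_apply, ← LinearMap.mem_ker]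
      apply ih
      rw [mem_genEigenspace_nat] at hv ⊢
      rwa [LinearMap.mem_ker, ← Module.End.mul_apply, ← pow_succ]
    · have hbot : f.genEigenspace μ ((k + 1 : ℕ) : ℕ∞) = ⊥ := by
        by_contra hne
        exact hμ (hasEigenvalue_of_hasGenEigenvalue (k := k + 1) hne)
      rw [hbot, Submodule.mem_bot] at hv
      simp [hv]

theorem linearMap_eq_zero_of_ker_comp_le_ker [IsAlgClosed K] [FiniteDimensional K V]
    (f : End K V) (Φ : V →ₗ[K] W)
    (h : ∀ μ, f.HasEigenvalue μ →
      LinearMap.ker (Φ ∘ₗ (f - μ • 1)) ≤ LinearMap.ker Φ) :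
    Φ = 0 := by
  rw [← LinearMap.ker_eq_top, eq_top_iff, ← f.iSup_maxGenEigenspace_eq_top]
  refine iSup_le fun μ => ?_
  rw [← iSup_genEigenspace_eq]
  exact iSup_le (genEigenspace_le_ker (h μ))

end Module.End

namespace Matrix

variable {K : Type*} [Field K] {q r s : Type*} [Fintype q] [Fintype r] [Fintype s]

theorem mem_spectrum_of_hasEigenvalue_vecMulLinear [DecidableEq q] {E : Matrix q q K} {μ : K}
    (hμ : Module.End.HasEigenvalue (vecMulLinear E) μ) : μ ∈ spectrum K E := by
  obtain ⟨x, hx⟩ := hμ.exists_hasEigenvector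
  rw [spectrum.mem_iff]
  intro hunit
  apply hx.2
  apply vecMul_injective_of_isUnit hunit
  simp only [Algebra.algebraMap_eq_smul_one]
  rw [vecMul_sub, vecMul_smul, vecMul_one, ← vecMulLinear_apply, hx.apply_eq_smul, sub_self,
    zero_vecMul]

theorem vecMul_injective_of_rank_eq_card {M : Matrix r s K} (h : M.rank = Fintype.card r) :
    Function.Injective M.vecMul := by
  rw [vecMul_injective_iff, linearIndependent_iff_card_eq_finrank_span, Set.finrank,
    ← rank_eq_finrank_span_row, h]

theorem eq_zero_of_mul_mul_eq_mul [DecidableEq q] [IsAlgClosed K] {P Q : Matrix r s K}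
    {E : Matrix q q K} (hPQ : ∀ μ ∈ spectrum K E, (P - μ • Q).rank = Fintype.card r)
    {S : Matrix q r K} (hS : E * S * Q = S * P) : S = 0 := by
  have hΦ : vecMulLinear S = 0 := by
    refine Module.End.linearMap_eq_zero_of_ker_comp_le_ker (vecMulLinear E) _
      fun μ hμ x hx => ?_
    rw [LinearMap.mem_ker, LinearMap.comp_apply] at hx
    rw [LinearMap.mem_ker]
    have hpencil :
        (x ᵥ* S) ᵥ* (P - μ • Q) = vecMulLinear S ((vecMulLinear E - μ • 1) x) ᵥ* Q := by
      simp only [vecMulLinear_apply, LinearMap.sub_apply, LinearMap.smul_apply,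
        Module.End.one_apply, vecMul_sub, sub_vecMul, vecMul_smul, smul_vecMul, vecMul_vecMul,
        ← hS, Matrix.mul_assoc]
    apply vecMul_injective_of_rank_eq_card (hPQ μ (mem_spectrum_of_hasEigenvalue_vecMulLinear hμ))
    change (x ᵥ* S) ᵥ* (P - μ • Q) = 0 ᵥ* (P - μ • Q)
    rw [hpencil, hx, zero_vecMul, zero_vecMul]
  exact vecMul_injective (funext fun x => by simpa using LinearMap.congr_fun hΦ x)

def generalizedSylvester (P Q : Matrix r s K) (E : Matrix q q K) :
    Matrix s q K →ₗ[K] Matrix r q K where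
  toFun W := Q * W * E - P * W
  map_add' W W' := by simp only [Matrix.mul_add, Matrix.add_mul]; abel
  map_smul' c W := by simp only [Matrix.mul_smul, Matrix.smul_mul, smul_sub, RingHom.id_apply]

omit [Fintype r] in
@[simp]
theorem generalizedSylvester_apply (P Q : Matrix r s K) (E : Matrix q q K) (W : Matrix s q K) :
    generalizedSylvester P Q E W = Q * W * E - P * W := rfl

theorem trace_conjTranspose_mul_generalizedSylvester [StarRing K] (P Q : Matrix r s K)
    (E : Matrix q q K) (V : Matrix r q K) (W : Matrix s q K) :
    (Vᴴ * generalizedSylvester P Q E W).trace =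
      ((generalizedSylvester Pᴴ Qᴴ Eᴴ V)ᴴ * W).trace := by
  simp only [generalizedSylvester_apply, conjTranspose_sub, conjTranspose_mul,
    conjTranspose_conjTranspose, Matrix.mul_sub, Matrix.sub_mul, trace_sub, Matrix.mul_assoc]
  rw [trace_mul_comm E]
  simp only [Matrix.mul_assoc]

theorem generalizedSylvester_surjective_of_injective [PartialOrder K] [StarRing K]
    [StarOrderedRing K] {P Q : Matrix r s K} {E : Matrix q q K}
    (h : Function.Injective (generalizedSylvester Pᴴ Qᴴ Eᴴ)) :
    Function.Surjective (generalizedSylvester P Q E) := by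
  set L := generalizedSylvester P Q E
  set L' := generalizedSylvester Pᴴ Qᴴ Eᴴ
  have hinj : Function.Injective (L ∘ₗ L') := by
    rw [← LinearMap.ker_eq_bot, eq_bot_iff]
    intro V hV
    have hnorm : ((L' V)ᴴ * L' V).trace = 0 := by
      rw [← trace_conjTranspose_mul_generalizedSylvester, ← LinearMap.comp_apply,
        LinearMap.mem_ker.mp hV, Matrix.mul_zero, trace_zero]
    exact h (by rw [trace_conjTranspose_mul_self_eq_zero_iff.mp hnorm, map_zero])
  intro R
  obtain ⟨V, hV⟩ := LinearMap.injective_iff_surjective.mp hinj R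
  exact ⟨L' V, hV⟩

theorem generalizedSylvester_surjective [DecidableEq q] [PartialOrder K] [StarRing K]
    [StarOrderedRing K] {K' : Type*} [Field K'] [IsAlgClosed K'] (φ : K →+* K')
    {P Q : Matrix r s K} {E : Matrix q q K}
    (hPQ : ∀ μ ∈ spectrum K' (E.map φ), (P.map φ - μ • Q.map φ).rank = Fintype.card r) :
    Function.Surjective (generalizedSylvester P Q E) := by
  refine generalizedSylvester_surjective_of_injective ?_
  rw [← LinearMap.ker_eq_bot, eq_bot_iff]
  intro V hV
  have hS : E * Vᴴ * Q = Vᴴ * P := by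
    have := congrArg conjTranspose (sub_eq_zero.mp (LinearMap.mem_ker.mp hV))
    simpa only [conjTranspose_mul, conjTranspose_conjTranspose, Matrix.mul_assoc] using this
  have hS0 : Vᴴ.map φ = 0 :=
    eq_zero_of_mul_mul_eq_mul hPQ (by simp only [← Matrix.map_mul, hS])
  rw [Submodule.mem_bot, ← conjTranspose_eq_zero]
  exact map_injective φ.injective (hS0.trans (Matrix.map_zero _ (map_zero φ)).symm)

theorem generalizedSylvester_fromBlocks_fromRows {n m p : Type*} [Fintype n] [Fintype m]
    [DecidableEq n] (A : Matrix n n K) (B : Matrix n m K) (C : Matrix p n K) (E : Matrix q q K)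
    (X : Matrix n q K) (U : Matrix m q K) :
    generalizedSylvester (fromBlocks A B C 0) (fromBlocks 1 0 0 0) E (fromRows X U) =
      fromRows (X * E - A * X - B * U) (-(C * X)) := by
  ext (i | i) j <;> simp [fromBlocks_mul_fromRows, fromRows_mul, sub_sub]

end Matrix

/-- Solvability of the regulator equations `XE = AX + BU + D`, `CX + F = 0` under the
Hautus-type rank condition at every eigenvalue of the exosystem matrix `E`. -/
theorem regulator_equations_solvable {n m p q : ℕ}
    (A : Matrix (Fin n) (Fin n) ℝ) (B : Matrix (Fin n) (Fin m) ℝ)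
    (C : Matrix (Fin p) (Fin n) ℝ) (E : Matrix (Fin q) (Fin q) ℝ)
    (hrank : ∀ lam ∈ spectrum ℂ (E.map Complex.ofReal),
      (Matrix.fromBlocks (A.map Complex.ofReal - lam • (1 : Matrix (Fin n) (Fin n) ℂ))
        (B.map Complex.ofReal) (C.map Complex.ofReal) (0 : Matrix (Fin p) (Fin m) ℂ)).rank
        = n + p) :
    ∀ (D : Matrix (Fin n) (Fin q) ℝ) (F : Matrix (Fin p) (Fin q) ℝ),
      ∃ (X : Matrix (Fin n) (Fin q) ℝ) (U : Matrix (Fin m) (Fin q) ℝ),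
        X * E = A * X + B * U + D ∧ C * X + F = 0 := by
  intro D F
  let P : Matrix (Fin n ⊕ Fin p) (Fin n ⊕ Fin m) ℝ := fromBlocks A B C 0
  let Q : Matrix (Fin n ⊕ Fin p) (Fin n ⊕ Fin m) ℝ := fromBlocks 1 0 0 0
  have hPQ : ∀ μ ∈ spectrum ℂ (E.map Complex.ofRealHom),
      (P.map Complex.ofRealHom - μ • Q.map Complex.ofRealHom).rank =
        Fintype.card (Fin n ⊕ Fin p) := by
    intro μ hμ
    have hblock : P.map Complex.ofRealHom - μ • Q.map Complex.ofRealHom =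
        fromBlocks (A.map Complex.ofReal - μ • 1) (B.map Complex.ofReal)
          (C.map Complex.ofReal) 0 := by
      ext (i | i) (j | j)
      · by_cases h : i = j <;> simp [P, Q, h]
      all_goals simp [P, Q]
    rw [hblock, Fintype.card_sum, Fintype.card_fin, Fintype.card_fin]
    exact hrank μ hμ
  obtain ⟨W, hW⟩ := generalizedSylvester_surjective Complex.ofRealHom hPQ (fromRows D F)
  rw [← fromRows_toRows W, generalizedSylvester_fromBlocks_fromRows] at hW
  obtain ⟨hX, hC⟩ := fromRows_inj hW
  exact ⟨W.toRows₁, W.toRows₂, by rw [← hX]; abel, by rw [← hC]; abel⟩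
end

section
/- Let A ∈ ℝ^{n×n}, B ∈ ℝ^{n×m}, C ∈ ℝ^{p×n}, E ∈ ℝ^{q×q}, D ∈ ℝ^{n×q}, F ∈ ℝ^{p×q}. Let K ∈ ℝ^{m×n} be such that A − BK is Hurwitz, let (X, U) solve the regulator equations XE = AX + BU + D and CX + F = 0, and set L = U + KX. Let v : ℝ → ℝ^q and x : ℝ → ℝⁿ be differentiable with v′(t) = Ev(t) and x′(t) = Ax(t) + B(−Kx(t) + Lv(t)) + Dv(t) for all t ≥ 0. Then the tracking error e(t) = Cx(t) + Fv(t) tends to 0 as t → ∞. -/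
/-!
With `z = x - X v`, the regulator equations turn the closed loop into `z' = (A - B K) z` and the
tracking error into `e = C z`, so it suffices that every solution of `z' = M z` with `M` Hurwitz
tends to zero. Over `ℂ` the initial value splits into generalized eigenvectors; for a
generalized eigenvector `y` of eigenvalue `μ`, the curve `e^{tμ} ∑_{k ≤ K} t^k/k! (M - μ)^k y`
solves the equation and decays because `Re μ < 0`. By uniqueness of solutions, `z` is the sum of
these decaying curves.
-/

open Matrix Filter

open Finset Topology
open scoped Nat

lemma tendsto_cexp_mul_mul_pow_atTop {μ : ℂ} (hμ : μ.re < 0) (k : ℕ) :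
    Tendsto (fun t : ℝ => Complex.exp (t * μ) * (t : ℂ) ^ k) atTop (𝓝 0) := by
  rw [tendsto_zero_iff_norm_tendsto_zero]
  have hr : 0 < -μ.re := neg_pos.2 hμ
  have h := ((Real.tendsto_pow_mul_exp_neg_atTop_nhds_zero k).comp
    (tendsto_id.const_mul_atTop hr)).const_mul ((-μ.re) ^ k)⁻¹
  rw [mul_zero] at h
  refine h.congr' ?_
  filter_upwards [eventually_ge_atTop 0] with t ht
  simp only [Function.comp_apply, id, Complex.norm_mul, Complex.norm_exp, norm_pow,
    Complex.norm_real, Real.norm_eq_abs, abs_of_nonneg ht, Complex.re_ofReal_mul]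
  rw [mul_pow, mul_assoc, inv_mul_cancel_left₀ (pow_ne_zero k hr.ne'), neg_mul, neg_neg,
    mul_comm, mul_comm t]

variable {V : Type*} [NormedAddCommGroup V] [NormedSpace ℂ V]

/-- When `(N ^ (K + 1)) y = 0`, this is `exp (t • N) y`. -/
noncomputable def truncExp (N : Module.End ℂ V) (K : ℕ) (y : V) (t : ℝ) : V :=
  ∑ k ∈ range (K + 1), ((t : ℂ) ^ k / k !) • (N ^ k) y

lemma hasDerivAt_truncExp {N : Module.End ℂ V} {K : ℕ} {y : V} (hy : (N ^ (K + 1)) y = 0)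
    (t : ℝ) : HasDerivAt (truncExp N K y) (N (truncExp N K y t)) t := by
  have hterm : ∀ k ∈ range (K + 1), HasDerivAt (fun s : ℝ => ((s : ℂ) ^ k / k !) • (N ^ k) y)
      (((k : ℂ) * (t : ℂ) ^ (k - 1) / k !) • (N ^ k) y) t := fun k _ =>
    (((hasDerivAt_pow k (t : ℂ)).comp_ofReal).div_const _).smul_const _
  refine (HasDerivAt.fun_sum hterm).congr_deriv ?_
  rw [truncExp, map_sum,
    sum_range_succ' (fun k => (((k : ℂ) * (t : ℂ) ^ (k - 1) / k !) • (N ^ k) y)), sum_range_succ]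
  have hNK : N ((N ^ K) y) = 0 := by rw [← Module.End.mul_apply, ← _root_.pow_succ', hy]
  simp only [map_smul, hNK, smul_zero, add_zero, CharP.cast_eq_zero, zero_mul, zero_div,
    zero_smul, add_tsub_cancel_right, _root_.pow_succ', Module.End.mul_apply]
  refine sum_congr rfl fun k _ => ?_
  rw [Nat.factorial_succ, Nat.cast_mul, Nat.cast_succ]
  congr 1
  field_simp

lemma tendsto_cexp_smul_truncExp {μ : ℂ} (hμ : μ.re < 0) (N : Module.End ℂ V) (K : ℕ) (y : V) :
    Tendsto (fun t : ℝ => Complex.exp (t * μ) • truncExp N K y t) atTop (𝓝 0) := by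
  simp only [truncExp, smul_sum, smul_smul, ← mul_div_assoc]
  simpa using tendsto_finsetSum (range (K + 1)) fun k _ =>
    ((tendsto_cexp_mul_mul_pow_atTop hμ k).div_const (k ! : ℂ)).smul_const ((N ^ k) y)

namespace Module.End

def stableSubspace (f : Module.End ℂ V) : Submodule ℂ V where
  carrier := {y | ∃ g : ℝ → V, g 0 = y ∧ (∀ t, HasDerivAt g (f (g t)) t) ∧
    Tendsto g atTop (𝓝 0)}
  zero_mem' := ⟨0, rfl, fun t => map_zero f ▸ hasDerivAt_const t 0, tendsto_const_nhds⟩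
  add_mem' := by
    rintro _ _ ⟨g₁, rfl, hg₁, hlim₁⟩ ⟨g₂, rfl, hg₂, hlim₂⟩
    refine ⟨g₁ + g₂, rfl, fun t => ?_, add_zero (0 : V) ▸ hlim₁.add hlim₂⟩
    rw [Pi.add_apply, map_add]
    exact (hg₁ t).add (hg₂ t)
  smul_mem' := by
    rintro c _ ⟨g, rfl, hg, hlim⟩
    refine ⟨c • g, rfl, fun t => ?_, smul_zero (A := V) c ▸ hlim.const_smul c⟩
    rw [Pi.smul_apply, map_smul]
    exact (hg t).const_smul c

lemma maxGenEigenspace_le_stableSubspace {f : Module.End ℂ V} {μ : ℂ} (hμ : μ.re < 0) :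
    f.maxGenEigenspace μ ≤ f.stableSubspace := by
  intro y hy
  obtain ⟨K, hK⟩ := (mem_maxGenEigenspace f μ y).1 hy
  set N := f - μ • 1
  have hNK : (N ^ (K + 1)) y = 0 := by rw [_root_.pow_succ', mul_apply, hK, map_zero]
  refine ⟨fun t => Complex.exp (t * μ) • truncExp N K y t, by simp [truncExp, sum_range_succ'],
    fun t => ?_, tendsto_cexp_smul_truncExp hμ N K y⟩
  have hexp : HasDerivAt (fun s : ℝ => Complex.exp (s * μ)) (Complex.exp (t * μ) * μ) t := by
    simpa using ((hasDerivAt_id (t : ℂ)).mul_const μ).cexp.comp_ofReal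
  refine (hexp.smul (hasDerivAt_truncExp hNK t)).congr_deriv ?_
  simp only [N, map_smul, LinearMap.sub_apply, LinearMap.smul_apply, one_apply, smul_sub,
    mul_comm _ μ, mul_smul, smul_comm μ]
  abel

lemma stableSubspace_eq_top [FiniteDimensional ℂ V] {f : Module.End ℂ V}
    (hf : ∀ μ ∈ spectrum ℂ f, μ.re < 0) : f.stableSubspace = ⊤ := by
  rw [eq_top_iff, ← f.iSup_maxGenEigenspace_eq_top]
  refine iSup_le fun μ => ?_
  by_cases hμ : f.maxGenEigenspace μ = ⊥
  · simp [hμ]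
  · exact maxGenEigenspace_le_stableSubspace (hf μ (HasUnifEigenvalue.lt one_pos hμ).mem_spectrum)

lemma eqOn_Ici_of_hasDerivAt [FiniteDimensional ℂ V] (f : Module.End ℂ V) {z g : ℝ → V}
    (hz : ∀ t, 0 ≤ t → HasDerivAt z (f (z t)) t) (hg : ∀ t, 0 ≤ t → HasDerivAt g (f (g t)) t)
    (h0 : z 0 = g 0) : Set.EqOn z g (Set.Ici 0) := fun _ ht =>
  ODE_solution_unique (v := fun _ => f) (fun _ => (LinearMap.toContinuousLinearMap f).lipschitz)
    (HasDerivAt.continuousOn fun s hs => hz s hs.1)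
    (fun s hs => (hz s hs.1).hasDerivWithinAt)
    (HasDerivAt.continuousOn fun s hs => hg s hs.1)
    (fun s hs => (hg s hs.1).hasDerivWithinAt) h0 ⟨ht, le_rfl⟩

theorem tendsto_zero_of_hasDerivAt [FiniteDimensional ℂ V] {f : Module.End ℂ V}
    (hf : ∀ μ ∈ spectrum ℂ f, μ.re < 0) {z : ℝ → V}
    (hz : ∀ t, 0 ≤ t → HasDerivAt z (f (z t)) t) : Tendsto z atTop (𝓝 0) := by
  obtain ⟨g, hg0, hg, hlim⟩ : z 0 ∈ f.stableSubspace := stableSubspace_eq_top hf ▸ trivial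
  refine hlim.congr' ?_
  filter_upwards [eventually_ge_atTop 0] with t ht
  exact eqOn_Ici_of_hasDerivAt f (fun s _ => hg s) hz hg0 ht

end Module.End

theorem Hurwitz.tendsto_zero {n : ℕ} {M : Matrix (Fin n) (Fin n) ℝ} (hM : Hurwitz M)
    {z : ℝ → Fin n → ℝ} (hz : ∀ t, 0 ≤ t → HasDerivAt z (M *ᵥ z t) t) :
    Tendsto z atTop (𝓝 0) := by
  set f := Matrix.toLinAlgEquiv' (M.map Complex.ofReal)
  have hf : ∀ μ ∈ spectrum ℂ f, μ.re < 0 := fun μ hμ =>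
    hM μ (by rwa [AlgEquiv.spectrum_eq] at hμ)
  have hzc : ∀ t, 0 ≤ t → HasDerivAt (fun s i => (z s i : ℂ)) (f fun i => (z t i : ℂ)) t := by
    intro t ht
    refine hasDerivAt_pi.2 fun i => ?_
    have hcomm : (M.map Complex.ofReal *ᵥ fun j => (z t j : ℂ)) i = ((M *ᵥ z t) i : ℂ) :=
      (RingHom.map_mulVec Complex.ofRealHom M (z t) i).symm
    rw [Matrix.toLinAlgEquiv'_apply, hcomm]
    exact (hasDerivAt_pi.1 (hz t ht) i).ofReal_comp
  have hlim := Module.End.tendsto_zero_of_hasDerivAt hf hzc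
  rw [tendsto_pi_nhds] at hlim ⊢
  exact fun i => tendsto_ofReal_iff.1 (hlim i)

theorem HasDerivAt.matrix_mulVec {m n : Type*} [Fintype m] [Fintype n] (X : Matrix m n ℝ)
    {v : ℝ → n → ℝ} {v' : n → ℝ} {t : ℝ} (h : HasDerivAt v v' t) :
    HasDerivAt (fun s => X *ᵥ v s) (X *ᵥ v') t :=
  ((Matrix.mulVecLin X).toContinuousLinearMap.hasFDerivAt (x := v t)).comp_hasDerivAt t h

/-- The feedback-feedforward control `u = −Kx + Lv` with `L = U + KX` solves the
linear output regulation problem: the tracking error `e = Cx + Fv` tends to zero. -/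
theorem output_regulation_tracking_error_tendsto_zero {n m p q : ℕ}
    (A : Matrix (Fin n) (Fin n) ℝ) (B : Matrix (Fin n) (Fin m) ℝ)
    (C : Matrix (Fin p) (Fin n) ℝ) (E : Matrix (Fin q) (Fin q) ℝ)
    (D : Matrix (Fin n) (Fin q) ℝ) (F : Matrix (Fin p) (Fin q) ℝ)
    (K : Matrix (Fin m) (Fin n) ℝ) (hK : Hurwitz (A - B * K))
    (X : Matrix (Fin n) (Fin q) ℝ) (U : Matrix (Fin m) (Fin q) ℝ)
    (hreg1 : X * E = A * X + B * U + D) (hreg2 : C * X + F = 0)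
    (L : Matrix (Fin m) (Fin q) ℝ) (hL : L = U + K * X)
    (v : ℝ → Fin q → ℝ) (x : ℝ → Fin n → ℝ)
    (hv : ∀ t : ℝ, 0 ≤ t → HasDerivAt v (E.mulVec (v t)) t)
    (hx : ∀ t : ℝ, 0 ≤ t → HasDerivAt x
      (A.mulVec (x t) + B.mulVec (-(K.mulVec (x t)) + L.mulVec (v t)) + D.mulVec (v t)) t) :
    Tendsto (fun t : ℝ => C.mulVec (x t) + F.mulVec (v t)) atTop (nhds 0) := by
  have hXE : X * E = (A - B * K) * X + B * L + D := by
    rw [hreg1, hL, Matrix.sub_mul, Matrix.mul_add, Matrix.mul_assoc]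
    abel
  have hz : ∀ t, 0 ≤ t →
      HasDerivAt (fun s => x s - X *ᵥ v s) ((A - B * K) *ᵥ (x t - X *ᵥ v t)) t := by
    intro t ht
    refine ((hx t ht).sub ((hv t ht).matrix_mulVec X)).congr_deriv ?_
    rw [mulVec_mulVec, hXE]
    simp only [add_mulVec, sub_mulVec, mulVec_sub, mulVec_add, mulVec_neg, ← mulVec_mulVec]
    abel
  have he : ∀ t, C *ᵥ x t + F *ᵥ v t = C *ᵥ (x t - X *ᵥ v t) := fun t => by
    rw [mulVec_sub, mulVec_mulVec, eq_neg_of_add_eq_zero_left hreg2, neg_mulVec, sub_neg_eq_add]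
  simp only [he]
  exact ((Matrix.mulVecLin C).continuous_of_finiteDimensional.tendsto' 0 0 (mulVec_zero C)).comp
    (hK.tendsto_zero hz)
end
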